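/- arXiv:1103.4584 — 5 statements merged into one kernel-verified Lean document; each statement's English description precedes it below -/
import Mathlib

section
/- Let F ⊆ ℝ^n be a nonempty convex polyhedron and let U, V ⊆ ℝ^n be polyhedra. Call a set W ⊆ ℝ^n τ-closed if (i) U ⊆ W, (ii) W is a finite union of convex polyhedra, and (iii) for all convex polyhedra P ⊆ ℝ^n \ V and Q ⊆ W, P ∩ preflow_F(bound(P, Q) ∩ preflow_F(Q)) ⊆ W. Then prwa_F(U, V) is τ-closed and is contained in every τ-closed set; that is, prwa_F(U, V) is the least τ-closed subset of ℝ^n. -/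
open Set

/-- Points of `ℝ^n`. -/
abbrev Vec (n : ℕ) := Fin n → ℝ

/-- A (strict or non-strict) affine half-space of `ℝ^ι`. -/
def IsHalfspace {ι : Type} [Fintype ι] (H : Set (ι → ℝ)) : Prop :=
  ∃ (a : ι → ℝ) (b : ℝ), H = {x | (∑ i, a i * x i) < b} ∨ H = {x | (∑ i, a i * x i) ≤ b}

/-- A convex polyhedron: a finite intersection of half-spaces. -/
def IsConvexPolyhedron {ι : Type} [Fintype ι] (P : Set (ι → ℝ)) : Prop :=
  ∃ (k : ℕ) (Hs : Fin k → Set (ι → ℝ)), (∀ i, IsHalfspace (Hs i)) ∧ P = ⋂ i, Hs i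

/-- A polyhedron: a finite union of convex polyhedra. -/
def IsPolyhedron {ι : Type} [Fintype ι] (G : Set (ι → ℝ)) : Prop :=
  ∃ (k : ℕ) (Ps : Fin k → Set (ι → ℝ)), (∀ i, IsConvexPolyhedron (Ps i)) ∧ G = ⋃ i, Ps i

/-- The pre-flow of `G` with respect to `F`:
`preflow_F(G) = {u | ∃ δ ≥ 0, ∃ c ∈ F, u + δ·c ∈ G}`. -/
def preflow {n : ℕ} (F G : Set (Vec n)) : Set (Vec n) :=
  {u | ∃ δ : ℝ, 0 ≤ δ ∧ ∃ c ∈ F, u + δ • c ∈ G}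

/-- The boundary of two sets: `bound(G, G') = (closure G ∩ G') ∪ (G ∩ closure G')`. -/
def bnd {n : ℕ} (G G' : Set (Vec n)) : Set (Vec n) :=
  (closure G ∩ G') ∪ (G ∩ closure G')

/-- `prwa_F(U, V)`: the points from which a piecewise straight-line trajectory with slopes
in `F` reaches `U`, every point along the way (except possibly the final one) lying in
`(ℝ^n \ V) ∪ U`. -/
def prwa {n : ℕ} (F U V : Set (Vec n)) : Set (Vec n) :=
  {u | ∃ (k : ℕ) (d : Fin k → ℝ) (c : Fin k → Vec n) (p : Fin (k + 1) → Vec n),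
    (∀ i, 0 ≤ d i) ∧ (∀ i, c i ∈ F) ∧ p 0 = u ∧
    (∀ i : Fin k, p i.succ = p i.castSucc + d i • c i) ∧
    p (Fin.last k) ∈ U ∧
    ∀ (i : Fin k) (t : ℝ), 0 ≤ t → t ≤ d i →
      p i.castSucc + t • c i = p (Fin.last k) ∨ p i.castSucc + t • c i ∈ Vᶜ ∪ U}

/-- `rwa_F(U, V)`: the points from which some differentiable trajectory with derivative in
`F` may reach `U` while staying in `(ℝ^n \ V) ∪ U` beforehand. -/
def rwaSet {n : ℕ} (F U V : Set (Vec n)) : Set (Vec n) :=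
  {u | ∃ f : ℝ → Vec n, Differentiable ℝ f ∧ f 0 = u ∧ (∀ t, 0 ≤ t → deriv f t ∈ F) ∧
    ∃ δ : ℝ, 0 ≤ δ ∧ f δ ∈ U ∧ ∀ δ', 0 ≤ δ' → δ' < δ → f δ' ∈ Vᶜ ∪ U}

/-- `W` is `τ`-closed (for the operator `τ(U,V,·)`): it contains `U`, is a finite union of
convex polyhedra, and is closed under adding the points of any convex polyhedron
`P ⊆ ℝ^n \ V` that may reach an entry region of a convex polyhedron `Q ⊆ W`. -/
def TauClosed {n : ℕ} (F U V W : Set (Vec n)) : Prop :=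
  U ⊆ W ∧ IsPolyhedron W ∧
  ∀ P Q : Set (Vec n), IsConvexPolyhedron P → P ⊆ Vᶜ → IsConvexPolyhedron Q → Q ⊆ W →
    P ∩ preflow F (bnd P Q ∩ preflow F Q) ⊆ W

/-!
A point of `prwa F U V` starts a piecewise linear path to `U` through `Vᶜ ∪ U`; cover `Vᶜ` by
finitely many convex polyhedra `D`. If the path starts in `D`, the segments up to its last exit
point `z` from `D` merge into a single segment with velocity in the convex set `F`, and `z` lies on
the boundary of `D` and of a convex piece of the set of points that reach `U` through the other
pieces. By induction on the number of pieces used, `prwa F U V` is obtained from `U` by as many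
rounds of `τ`-steps over the pieces of `Vᶜ` as there are pieces. Every `τ`-closed set contains all
these rounds, and each round is a polyhedron: pre-flows of polyhedra are polyhedra because
projections of convex polyhedra (with strict and non-strict inequalities) are convex polyhedra, by
Fourier–Motzkin elimination.
-/

open Filter Topology
open scoped Pointwise

def ltOrLe (s : Bool) (a b : ℝ) : Prop := cond s (a < b) (a ≤ b)

section LtOrLe
variable {s s' : Bool} {a b c d : ℝ}

lemma ltOrLe.le (h : ltOrLe s a b) : a ≤ b := by
  cases s
  exacts [h, h.le]

lemma ltOrLe_of_lt (h : a < b) : ltOrLe s a b := by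
  cases s
  exacts [h.le, h]

lemma ltOrLe.trans_le' (h : ltOrLe s b c) (h' : a ≤ b) : ltOrLe s a c := by
  cases s
  exacts [le_trans h' h, lt_of_le_of_lt h' h]

lemma ltOrLe.add (h : ltOrLe s a b) (h' : ltOrLe s' c d) : ltOrLe (s || s') (a + c) (b + d) := by
  cases s <;> cases s'
  exacts [add_le_add h h', add_lt_add_of_le_of_lt h h', add_lt_add_of_lt_of_le h h',
    add_lt_add h h']

lemma ltOrLe_mul_left_iff (hc : 0 < c) : ltOrLe s (c * a) (c * b) ↔ ltOrLe s a b := by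
  cases s
  exacts [mul_le_mul_iff_right₀ hc, mul_lt_mul_iff_right₀ hc]

lemma ltOrLe_iff_of_sub_eq (h : b - a = d - c) : ltOrLe s a b ↔ ltOrLe s c d := by
  cases s <;> simp only [ltOrLe, cond_true, cond_false] <;> constructor <;> intro <;> linarith

lemma not_ltOrLe_iff : ¬ ltOrLe s a b ↔ ltOrLe (!s) (-a) (-b) := by
  cases s
  exacts [by simp [ltOrLe], by simp [ltOrLe]]

lemma ltOrLe_midpoint (h : ltOrLe (s || s') a b) :
    ltOrLe s a ((a + b) / 2) ∧ ltOrLe s' ((a + b) / 2) b := by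
  cases s <;> cases s' <;> simp only [ltOrLe, Bool.or_false, Bool.or_true,
    cond_true, cond_false] at h ⊢ <;> constructor <;> linarith

lemma ltOrLe.add_mul_of_add_mul_le {t δ : ℝ} (h : ltOrLe s a b) (h' : a + δ * c ≤ b)
    (ht : 0 ≤ t) (htδ : t < δ) : ltOrLe s (a + t * c) b := by
  rcases le_or_gt c 0 with hc | hc
  · exact h.trans_le' (by nlinarith)
  · exact ltOrLe_of_lt (by nlinarith)

end LtOrLe

section OneVariable
variable {s s' : Bool} {p p' α α' b b' : ℝ}

lemma eventually_atBot_ltOrLe (hα : 0 ≤ α) (h : α = 0 → ltOrLe s p b) :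
    ∀ᶠ t in atBot, ltOrLe s (p + t * α) b := by
  rcases hα.eq_or_lt with rfl | hα
  · simpa using Eventually.of_forall (f := atBot) fun _ : ℝ => h rfl
  · filter_upwards [eventually_lt_atBot ((b - p) / α)] with t ht
    exact ltOrLe_of_lt (by rw [lt_div_iff₀ hα] at ht; linarith)

lemma eventually_atTop_ltOrLe (hα : α ≤ 0) (h : α = 0 → ltOrLe s p b) :
    ∀ᶠ t in atTop, ltOrLe s (p + t * α) b := by
  rcases hα.eq_or_lt with rfl | hα
  · simpa using Eventually.of_forall (f := atTop) fun _ : ℝ => h rfl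
  · filter_upwards [eventually_gt_atTop ((b - p) / α)] with t ht
    exact ltOrLe_of_lt (by rw [div_lt_iff_of_neg hα] at ht; linarith)

lemma ltOrLe_add_mul_iff_of_pos (hα : 0 < α) {t : ℝ} :
    ltOrLe s (p + t * α) b ↔ ltOrLe s t ((b - p) / α) := by
  rw [← ltOrLe_mul_left_iff hα (a := t)]
  exact ltOrLe_iff_of_sub_eq (by field_simp; ring)

lemma ltOrLe_add_mul_iff_of_neg (hα : α < 0) {t : ℝ} :
    ltOrLe s (p + t * α) b ↔ ltOrLe s ((b - p) / α) t := by
  rw [← ltOrLe_mul_left_iff (neg_pos.2 hα) (a := (b - p) / α)]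
  exact ltOrLe_iff_of_sub_eq (by field_simp [hα.ne]; ring)

/-- The last condition is the Fourier–Motzkin combination eliminating `t`. -/
lemma exists_ltOrLe_and_ltOrLe_iff :
    (∃ t, ltOrLe s (p + t * α) b ∧ ltOrLe s' (p' + t * α') b') ↔
      (α = 0 → ltOrLe s p b) ∧ (α' = 0 → ltOrLe s' p' b') ∧
      (α * α' < 0 → ltOrLe (s || s') (|α'| * p + |α| * p') (|α'| * b + |α| * b')) := by
  constructor
  · rintro ⟨t, h, h'⟩
    refine ⟨fun hα => by simpa [hα] using h, fun hα => by simpa [hα] using h', fun hαα => ?_⟩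
    have hα : α ≠ 0 := left_ne_zero_of_mul hαα.ne
    have hα' : α' ≠ 0 := right_ne_zero_of_mul hαα.ne
    have hcancel : |α'| * α + |α| * α' = 0 := by
      rcases hα.lt_or_gt with hα | hα
      · rw [abs_of_neg hα, abs_of_pos (by nlinarith : 0 < α')]; ring
      · rw [abs_of_pos hα, abs_of_neg (by nlinarith : α' < 0)]; ring
    have hsum := ((ltOrLe_mul_left_iff (abs_pos.2 hα')).2 h).add
      ((ltOrLe_mul_left_iff (abs_pos.2 hα)).2 h')
    exact (ltOrLe_iff_of_sub_eq (by linear_combination (-t) * hcancel)).1 hsum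
  · rintro ⟨h₁, h₂, h₃⟩
    by_cases hαα : α * α' < 0
    · replace h₃ := h₃ hαα
      wlog hα : 0 < α generalizing s s' p p' α α' b b'
      · have hα' : 0 < α' := by
          by_contra! hα'
          nlinarith [mul_nonneg_of_nonpos_of_nonpos (not_lt.1 hα) hα']
        obtain ⟨t, h', h⟩ := this h₂ h₁ (by rwa [mul_comm])
          (by rwa [Bool.or_comm, add_comm (|α| * p'), add_comm (|α| * b')]) hα'
        exact ⟨t, h, h'⟩
      have hα' : α' < 0 := by nlinarith
      have hq : ltOrLe (s' || s) ((b' - p') / α') ((b - p) / α) := by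
        rw [← ltOrLe_mul_left_iff (mul_pos hα (neg_pos.2 hα')), Bool.or_comm]
        rw [abs_of_pos hα, abs_of_neg hα'] at h₃
        exact (ltOrLe_iff_of_sub_eq (by field_simp [hα'.ne]; ring)).1 h₃
      obtain ⟨h', h⟩ := ltOrLe_midpoint hq
      exact ⟨_, (ltOrLe_add_mul_iff_of_pos hα).2 h, (ltOrLe_add_mul_iff_of_neg hα').2 h'⟩
    · rcases mul_nonneg_iff.1 (not_lt.1 hαα) with ⟨hα, hα'⟩ | ⟨hα, hα'⟩
      · exact ((eventually_atBot_ltOrLe hα h₁).and (eventually_atBot_ltOrLe hα' h₂)).exists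
      · exact ((eventually_atTop_ltOrLe hα h₁).and (eventually_atTop_ltOrLe hα' h₂)).exists

end OneVariable

section ConvexPolyhedral
variable {E E' : Type*} [AddCommGroup E] [Module ℝ E] [AddCommGroup E'] [Module ℝ E']

def halfspace (φ : E →ₗ[ℝ] ℝ) (b : ℝ) (s : Bool) : Set E := {x | ltOrLe s (φ x) b}

/-- Coordinate-free form of `IsConvexPolyhedron`, see `isConvexPolyhedron_iff`. -/
def IsConvexPolyhedral (P : Set E) : Prop :=
  ∃ C : Set ((E →ₗ[ℝ] ℝ) × ℝ × Bool), C.Finite ∧ P = ⋂ c ∈ C, halfspace c.1 c.2.1 c.2.2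

variable {φ : E →ₗ[ℝ] ℝ} {b : ℝ} {s : Bool} {P Q : Set E}

@[simp] lemma mem_halfspace {x : E} : x ∈ halfspace φ b s ↔ ltOrLe s (φ x) b := Iff.rfl

lemma convex_halfspace : Convex ℝ (halfspace φ b s) := by
  cases s
  exacts [convex_halfSpace_le φ.isLinear b, convex_halfSpace_lt φ.isLinear b]

lemma compl_halfspace : (halfspace φ b s)ᶜ = halfspace (-φ) (-b) (!s) := by
  ext x
  simp [not_ltOrLe_iff]

lemma preimage_add_smul_halfspace (x v : E) :
    (fun t : ℝ => x + t • v) ⁻¹' halfspace φ b s =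
      halfspace (φ ∘ₗ LinearMap.toSpanSingleton ℝ E v) (b - φ x) s := by
  ext t
  exact ltOrLe_iff_of_sub_eq (by simp; ring)

lemma isConvexPolyhedral_halfspace : IsConvexPolyhedral (halfspace φ b s) :=
  ⟨{(φ, b, s)}, finite_singleton _, by simp⟩

lemma isConvexPolyhedral_univ : IsConvexPolyhedral (univ : Set E) :=
  ⟨∅, finite_empty, by simp⟩

lemma isConvexPolyhedral_empty : IsConvexPolyhedral (∅ : Set E) := by
  convert isConvexPolyhedral_halfspace (φ := (0 : E →ₗ[ℝ] ℝ)) (b := 0) (s := true)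
  ext
  simp [ltOrLe]

namespace IsConvexPolyhedral

lemma convex (hP : IsConvexPolyhedral P) : Convex ℝ P := by
  obtain ⟨C, -, rfl⟩ := hP
  exact convex_iInter₂ fun _ _ => convex_halfspace

lemma inter (hP : IsConvexPolyhedral P) (hQ : IsConvexPolyhedral Q) :
    IsConvexPolyhedral (P ∩ Q) := by
  obtain ⟨C, hC, rfl⟩ := hP
  obtain ⟨C', hC', rfl⟩ := hQ
  exact ⟨C ∪ C', hC.union hC', (biInter_union _ _ _).symm⟩

lemma biInter {κ : Type*} {S : Set κ} (hS : S.Finite) {P : κ → Set E}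
    (hP : ∀ i ∈ S, IsConvexPolyhedral (P i)) : IsConvexPolyhedral (⋂ i ∈ S, P i) := by
  induction S, hS using Set.Finite.induction_on with
  | empty => simpa using isConvexPolyhedral_univ
  | insert _ _ ih =>
    rw [biInter_insert]
    exact (hP _ (mem_insert _ _)).inter (ih fun i hi => hP i (mem_insert_of_mem _ hi))

lemma preimage (hP : IsConvexPolyhedral P) (L : E' →ₗ[ℝ] E) : IsConvexPolyhedral (L ⁻¹' P) := by
  obtain ⟨C, hC, rfl⟩ := hP
  refine ⟨(fun c => (c.1 ∘ₗ L, c.2)) '' C, hC.image _, ?_⟩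
  rw [preimage_iInter₂, biInter_image]
  rfl

end IsConvexPolyhedral

lemma add_smul_mem_biInter_halfspace {C : Set ((E →ₗ[ℝ] ℝ) × ℝ × Bool)} {x v : E} {t δ : ℝ}
    (hx : x ∈ ⋂ c ∈ C, halfspace c.1 c.2.1 c.2.2)
    (hy : x + δ • v ∈ ⋂ c ∈ C, halfspace c.1 c.2.1 false) (ht : 0 ≤ t) (htδ : t < δ) :
    x + t • v ∈ ⋂ c ∈ C, halfspace c.1 c.2.1 c.2.2 := by
  simp only [mem_iInter₂, mem_halfspace, map_add, map_smul, smul_eq_mul] at hx hy ⊢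
  exact fun c hc => (hx c hc).add_mul_of_add_mul_le (hy c hc) ht htδ

end ConvexPolyhedral

section Elimination
variable {E E' : Type*} [AddCommGroup E] [Module ℝ E] [AddCommGroup E'] [Module ℝ E']
  {P : Set E}

lemma isConvexPolyhedral_exists_add_smul_mem_inter (φ φ' : E →ₗ[ℝ] ℝ) (b b' : ℝ) (s s' : Bool)
    (v : E) :
    IsConvexPolyhedral {x | ∃ t : ℝ, x + t • v ∈ halfspace φ b s ∩ halfspace φ' b' s'} := by
  have key : {x | ∃ t : ℝ, x + t • v ∈ halfspace φ b s ∩ halfspace φ' b' s'} =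
      (if φ v = 0 then halfspace φ b s else univ) ∩
      (if φ' v = 0 then halfspace φ' b' s' else univ) ∩
      (if φ v * φ' v < 0 then
        halfspace (|φ' v| • φ + |φ v| • φ') (|φ' v| * b + |φ v| * b') (s || s') else univ) := by
    ext x
    simp only [mem_ofPred_eq, mem_inter_iff, mem_halfspace, map_add, map_smul, smul_eq_mul,
      exists_ltOrLe_and_ltOrLe_iff]
    split_ifs <;> simp_all
  rw [key]
  refine (IsConvexPolyhedral.inter ?_ ?_).inter ?_ <;>
    split_ifs <;> first | exact isConvexPolyhedral_halfspace | exact isConvexPolyhedral_univ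

/-- Fourier–Motzkin elimination: by Helly's theorem on the line it suffices to eliminate `t` from
pairs of constraints. -/
lemma IsConvexPolyhedral.exists_add_smul (hP : IsConvexPolyhedral P) (v : E) :
    IsConvexPolyhedral {x | ∃ t : ℝ, x + t • v ∈ P} := by
  obtain ⟨C, hC, rfl⟩ := hP
  set H : (E →ₗ[ℝ] ℝ) × ℝ × Bool → Set E := fun c => halfspace c.1 c.2.1 c.2.2
  suffices {x | ∃ t : ℝ, x + t • v ∈ ⋂ c ∈ C, H c} =
      ⋂ c ∈ C, ⋂ c' ∈ C, {x | ∃ t : ℝ, x + t • v ∈ H c ∩ H c'} by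
    rw [this]
    exact .biInter hC fun c _ => .biInter hC fun c' _ =>
      isConvexPolyhedral_exists_add_smul_mem_inter _ _ _ _ _ _ v
  ext x
  simp only [mem_ofPred_eq, mem_iInter]
  refine ⟨fun ⟨t, ht⟩ c hc c' hc' => ⟨t, ht c hc, ht c' hc'⟩, fun h => ?_⟩
  classical
  obtain ⟨t, ht⟩ := Convex.helly_theorem' (𝕜 := ℝ) (s := hC.toFinset)
    (F := fun c => (fun t : ℝ => x + t • v) ⁻¹' H c)
    (fun c _ => by simpa [H, preimage_add_smul_halfspace] using convex_halfspace)
    (fun I hI hcard => by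
      simp only [Module.finrank_self] at hcard
      have hIC : ∀ c ∈ I, c ∈ C := fun c hc => hC.mem_toFinset.1 (hI hc)
      interval_cases hk : I.card
      · simp [Finset.card_eq_zero.1 hk]
      · obtain ⟨c, rfl⟩ := Finset.card_eq_one.1 hk
        simpa [Set.Nonempty] using h c (hIC c (by simp)) c (hIC c (by simp))
      · obtain ⟨c, c', -, rfl⟩ := Finset.card_eq_two.1 hk
        simpa [Set.Nonempty] using h c (hIC c (by simp)) c' (hIC c' (by simp)))
  exact ⟨t, by simpa using ht⟩

lemma IsConvexPolyhedral.exists_add_sum_smul (hP : IsConvexPolyhedral P) {m : ℕ} (v : Fin m → E) :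
    IsConvexPolyhedral {x | ∃ c : Fin m → ℝ, x + ∑ i, c i • v i ∈ P} := by
  induction m with
  | zero => simpa using hP
  | succ m ih =>
    convert (ih (v ∘ Fin.succ)).exists_add_smul (v 0) using 1
    ext x
    simp [Fin.exists_fin_succ_pi, Fin.sum_univ_succ, add_assoc]

lemma IsConvexPolyhedral.exists_add_map [FiniteDimensional ℝ E'] (hP : IsConvexPolyhedral P)
    (f : E' →ₗ[ℝ] E) : IsConvexPolyhedral {x | ∃ y, x + f y ∈ P} := by
  set B := Module.finBasis ℝ E'
  convert hP.exists_add_sum_smul (fun i => f (B i)) using 1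
  ext x
  refine ⟨fun ⟨y, hy⟩ => ⟨B.repr y, ?_⟩, fun ⟨c, hc⟩ => ⟨∑ i, c i • B i, by simpa using hc⟩⟩
  have hfy : f y = ∑ i, B.repr y i • f (B i) := by
    conv_lhs => rw [← B.sum_repr y]
    rw [map_sum]
    simp only [map_smul]
  rwa [← hfy]

end Elimination

section Flow
variable {E : Type*} [AddCommGroup E] [Module ℝ E] {F G : Set E}

lemma IsConvexPolyhedral.setOf_pos_inv_smul_mem (hF : IsConvexPolyhedral F) :
    IsConvexPolyhedral {p : ℝ × E | 0 < p.1 ∧ p.1⁻¹ • p.2 ∈ F} := by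
  obtain ⟨C, hC, rfl⟩ := hF
  have key : {p : ℝ × E | 0 < p.1 ∧ p.1⁻¹ • p.2 ∈ ⋂ c ∈ C, halfspace c.1 c.2.1 c.2.2} =
      halfspace (-LinearMap.fst ℝ ℝ E) 0 true ∩
        ⋂ c ∈ C, halfspace (c.1 ∘ₗ LinearMap.snd ℝ ℝ E - c.2.1 • LinearMap.fst ℝ ℝ E) 0 c.2.2 := by
    ext ⟨δ, w⟩
    have hpos : ltOrLe true ((-LinearMap.fst ℝ ℝ E) (δ, w)) 0 ↔ 0 < δ := by simp [ltOrLe]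
    simp only [mem_ofPred_eq, mem_inter_iff, mem_iInter₂, mem_halfspace]
    rw [hpos]
    refine and_congr_right fun hδ => forall₂_congr fun c _ => ?_
    rw [← ltOrLe_mul_left_iff hδ]
    exact ltOrLe_iff_of_sub_eq (by simp; field_simp)
  rw [key]
  exact isConvexPolyhedral_halfspace.inter (.biInter hC fun _ _ => isConvexPolyhedral_halfspace)

/-- With `w = δ • c` the conditions are linear in `(u, δ, w)`; then `(δ, w)` is eliminated. -/
lemma IsConvexPolyhedral.setOf_exists_pos_add_smul_mem [FiniteDimensional ℝ E]
    (hF : IsConvexPolyhedral F) (hG : IsConvexPolyhedral G) :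
    IsConvexPolyhedral {u | ∃ δ : ℝ, 0 < δ ∧ ∃ c ∈ F, u + δ • c ∈ G} := by
  have hS : IsConvexPolyhedral
      (LinearMap.snd ℝ E (ℝ × E) ⁻¹' {p : ℝ × E | 0 < p.1 ∧ p.1⁻¹ • p.2 ∈ F} ∩
        (LinearMap.fst ℝ E (ℝ × E) + LinearMap.snd ℝ ℝ E ∘ₗ LinearMap.snd ℝ E (ℝ × E)) ⁻¹' G) :=
    (hF.setOf_pos_inv_smul_mem.preimage _).inter (hG.preimage _)
  convert (hS.exists_add_map (LinearMap.inr ℝ E (ℝ × E))).preimage (LinearMap.inl ℝ E (ℝ × E))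
    using 1
  ext u
  simp only [mem_ofPred_eq, mem_preimage, mem_inter_iff, LinearMap.inl_apply,
    LinearMap.inr_apply, Prod.mk_add_mk, zero_add, add_zero, LinearMap.snd_apply,
    LinearMap.add_apply, LinearMap.fst_apply, LinearMap.coe_comp, Function.comp_apply,
    Prod.exists]
  constructor
  · rintro ⟨δ, hδ, c, hc, h⟩
    exact ⟨δ, δ • c, ⟨hδ, by rwa [inv_smul_smul₀ hδ.ne']⟩, h⟩
  · rintro ⟨δ, w, ⟨hδ, hw⟩, h⟩
    exact ⟨δ, hδ, δ⁻¹ • w, hw, by rwa [smul_inv_smul₀ hδ.ne']⟩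

end Flow

section Closure
variable {E : Type*} [NormedAddCommGroup E] [NormedSpace ℝ E] [FiniteDimensional ℝ E]
  {φ : E →ₗ[ℝ] ℝ} {b : ℝ} {s : Bool} {P : Set E}

lemma isClosed_halfspace_false : IsClosed (halfspace φ b false) :=
  isClosed_le φ.continuous_of_finiteDimensional continuous_const

lemma closure_halfspace_subset : closure (halfspace φ b s) ⊆ halfspace φ b false :=
  closure_minimal (fun _ hx => ltOrLe.le hx) isClosed_halfspace_false

/-- This fails for general convex sets, e.g. an open half-plane with one boundary point added. -/
lemma IsConvexPolyhedral.add_smul_mem (hP : IsConvexPolyhedral P) {x v : E} {t δ : ℝ}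
    (hx : x ∈ P) (hy : x + δ • v ∈ closure P) (ht : 0 ≤ t) (htδ : t < δ) : x + t • v ∈ P := by
  obtain ⟨C, -, rfl⟩ := hP
  refine add_smul_mem_biInter_halfspace hx ?_ ht htδ
  exact mem_iInter₂.2 fun c hc =>
    closure_halfspace_subset (closure_mono (biInter_subset_of_mem hc) hy)

lemma IsConvexPolyhedral.closure (hP : IsConvexPolyhedral P) :
    IsConvexPolyhedral (closure P) := by
  rcases P.eq_empty_or_nonempty with rfl | ⟨x, hx⟩
  · simpa using isConvexPolyhedral_empty
  obtain ⟨C, hC, rfl⟩ := hP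
  refine ⟨(fun c => (c.1, c.2.1, false)) '' C, hC.image _, ?_⟩
  rw [biInter_image]
  refine (closure_minimal (iInter₂_mono fun _ _ _ hy => ltOrLe.le hy)
    (isClosed_biInter fun _ _ => isClosed_halfspace_false)).antisymm fun y hy => ?_
  have hlim : Tendsto (fun t : ℝ => x + t • (y - x)) (𝓝[<] 1) (𝓝 y) := by
    have : Continuous fun t : ℝ => x + t • (y - x) := by fun_prop
    simpa using (this.tendsto 1).mono_left nhdsWithin_le_nhds
  refine mem_closure_of_tendsto hlim ?_
  filter_upwards [Ico_mem_nhdsLT zero_lt_one] with t ht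
  exact add_smul_mem_biInter_halfspace hx (by rw [one_smul, add_sub_cancel]; exact hy)
    ht.1 ht.2

end Closure

section Coordinates
variable {ι : Type} [Fintype ι] {P G G' : Set (ι → ℝ)}

lemma isHalfspace_iff {H : Set (ι → ℝ)} : IsHalfspace H ↔ ∃ φ b s, H = halfspace φ b s := by
  constructor
  · rintro ⟨a, b, rfl | rfl⟩
    · exact ⟨∑ i, a i • LinearMap.proj i, b, true, by ext; simp [ltOrLe]⟩
    · exact ⟨∑ i, a i • LinearMap.proj i, b, false, by ext; simp [ltOrLe]⟩
  · rintro ⟨φ, b, s, rfl⟩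
    classical
    set a : ι → ℝ := fun i => φ fun j => if i = j then 1 else 0
    have hφ : halfspace φ b s = {x | ltOrLe s (∑ i, a i * x i) b} := by
      ext x
      rw [mem_halfspace, φ.pi_apply_eq_sum_univ x]
      simp only [smul_eq_mul, mul_comm, a, mem_ofPred_eq]
    cases s
    exacts [⟨a, b, .inr hφ⟩, ⟨a, b, .inl hφ⟩]

lemma isConvexPolyhedron_iff : IsConvexPolyhedron P ↔ IsConvexPolyhedral P := by
  constructor
  · rintro ⟨k, H, hH, rfl⟩
    choose φ b s hs using fun i => isHalfspace_iff.1 (hH i)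
    exact ⟨range fun i => (φ i, b i, s i), finite_range _, by simp [hs]⟩
  · rintro ⟨C, hC, rfl⟩
    obtain ⟨k, c, -, rfl⟩ := hC.fin_param
    exact ⟨k, fun i => halfspace (c i).1 (c i).2.1 (c i).2.2,
      fun i => isHalfspace_iff.2 ⟨_, _, _, rfl⟩, by rw [biInter_range]⟩

lemma isPolyhedron_iff : IsPolyhedron G ↔
    ∃ Ps : Set (Set (ι → ℝ)), Ps.Finite ∧ (∀ P ∈ Ps, IsConvexPolyhedral P) ∧ G = ⋃₀ Ps := by
  constructor
  · rintro ⟨k, Ps, hPs, rfl⟩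
    exact ⟨range Ps, finite_range _, forall_mem_range.2 fun i => isConvexPolyhedron_iff.1 (hPs i),
      (sUnion_range Ps).symm⟩
  · rintro ⟨Ps, hPs, hP, rfl⟩
    obtain ⟨k, Ps, -, rfl⟩ := hPs.fin_param
    exact ⟨k, Ps, fun i => isConvexPolyhedron_iff.2 (hP _ (mem_range_self i)), sUnion_range Ps⟩

lemma IsConvexPolyhedral.isPolyhedron (hP : IsConvexPolyhedral P) : IsPolyhedron P :=
  isPolyhedron_iff.2 ⟨{P}, finite_singleton P, by simpa using hP, (sUnion_singleton P).symm⟩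

lemma isPolyhedron_empty : IsPolyhedron (∅ : Set (ι → ℝ)) :=
  isPolyhedron_iff.2 ⟨∅, finite_empty, by simp, sUnion_empty.symm⟩

namespace IsPolyhedron

lemma union (hG : IsPolyhedron G) (hG' : IsPolyhedron G') : IsPolyhedron (G ∪ G') := by
  obtain ⟨Ps, hPs, hP, rfl⟩ := isPolyhedron_iff.1 hG
  obtain ⟨Ps', hPs', hP', rfl⟩ := isPolyhedron_iff.1 hG'
  exact isPolyhedron_iff.2 ⟨Ps ∪ Ps', hPs.union hPs', fun P hP'' => hP''.elim (hP P) (hP' P),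
    (sUnion_union Ps Ps').symm⟩

lemma biUnion {κ : Type*} {S : Set κ} (hS : S.Finite) {G : κ → Set (ι → ℝ)}
    (hG : ∀ i ∈ S, IsPolyhedron (G i)) : IsPolyhedron (⋃ i ∈ S, G i) := by
  induction S, hS using Set.Finite.induction_on with
  | empty => simpa using isPolyhedron_empty
  | insert _ _ ih =>
    rw [biUnion_insert]
    exact (hG _ (mem_insert _ _)).union (ih fun i hi => hG i (mem_insert_of_mem _ hi))

lemma inter (hG : IsPolyhedron G) (hG' : IsPolyhedron G') : IsPolyhedron (G ∩ G') := by
  obtain ⟨Ps, hPs, hP, rfl⟩ := isPolyhedron_iff.1 hG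
  obtain ⟨Ps', hPs', hP', rfl⟩ := isPolyhedron_iff.1 hG'
  rw [sUnion_inter_sUnion]
  exact .biUnion (hPs.prod hPs') fun p hp => ((hP _ hp.1).inter (hP' _ hp.2)).isPolyhedron

lemma biInter {κ : Type*} {S : Set κ} (hS : S.Finite) {G : κ → Set (ι → ℝ)}
    (hG : ∀ i ∈ S, IsPolyhedron (G i)) : IsPolyhedron (⋂ i ∈ S, G i) := by
  induction S, hS using Set.Finite.induction_on with
  | empty => simpa using isConvexPolyhedral_univ.isPolyhedron
  | insert _ _ ih =>
    rw [biInter_insert]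
    exact (hG _ (mem_insert _ _)).inter (ih fun i hi => hG i (mem_insert_of_mem _ hi))

lemma compl (hG : IsPolyhedron G) : IsPolyhedron Gᶜ := by
  obtain ⟨Ps, hPs, hP, rfl⟩ := isPolyhedron_iff.1 hG
  rw [compl_sUnion, sInter_image]
  refine .biInter hPs fun P hP' => ?_
  obtain ⟨C, hC, rfl⟩ := hP P hP'
  rw [compl_iInter₂]
  exact .biUnion hC fun c _ => by
    rw [compl_halfspace]
    exact isConvexPolyhedral_halfspace.isPolyhedron

end IsPolyhedron

open Classical in
/-- A choice of convex pieces of a polyhedron (`∅` for other sets). -/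
noncomputable def pieces (G : Set (ι → ℝ)) : Set (Set (ι → ℝ)) :=
  if h : IsPolyhedron G then (isPolyhedron_iff.1 h).choose else ∅

lemma IsPolyhedron.pieces_spec (hG : IsPolyhedron G) :
    (pieces G).Finite ∧ (∀ P ∈ pieces G, IsConvexPolyhedral P) ∧ G = ⋃₀ pieces G := by
  rw [pieces, dif_pos hG]
  exact (isPolyhedron_iff.1 hG).choose_spec

end Coordinates

section Preflow
variable {n : ℕ} {F G P Q : Set (Vec n)}

lemma preflow_eq_union (hF : F.Nonempty) :
    preflow F G = G ∪ {u | ∃ δ : ℝ, 0 < δ ∧ ∃ c ∈ F, u + δ • c ∈ G} := by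
  ext u
  constructor
  · rintro ⟨δ, hδ, c, hc, h⟩
    rcases hδ.eq_or_lt with rfl | hδ
    · exact .inl (by simpa using h)
    · exact .inr ⟨δ, hδ, c, hc, h⟩
  · rintro (h | ⟨δ, hδ, c, hc, h⟩)
    · obtain ⟨c, hc⟩ := hF
      exact ⟨0, le_rfl, c, hc, by simpa using h⟩
    · exact ⟨δ, hδ.le, c, hc, h⟩

lemma preflow_sUnion {Ps : Set (Set (Vec n))} : preflow F (⋃₀ Ps) = ⋃ P ∈ Ps, preflow F P := by
  ext u
  simp only [preflow, mem_sUnion, mem_iUnion, mem_ofPred_eq, exists_prop]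
  exact ⟨fun ⟨δ, hδ, c, hc, P, hP, h⟩ => ⟨P, hP, δ, hδ, c, hc, h⟩,
    fun ⟨P, hP, δ, hδ, c, hc, h⟩ => ⟨δ, hδ, c, hc, P, hP, h⟩⟩

lemma IsPolyhedron.preflow (hF : IsConvexPolyhedron F) (hFne : F.Nonempty)
    (hG : IsPolyhedron G) : IsPolyhedron (preflow F G) := by
  obtain ⟨Ps, hPs, hP, rfl⟩ := isPolyhedron_iff.1 hG
  rw [preflow_sUnion]
  refine .biUnion hPs fun P hP' => ?_
  rw [preflow_eq_union hFne]
  exact (hP P hP').isPolyhedron.union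
    ((isConvexPolyhedron_iff.1 hF).setOf_exists_pos_add_smul_mem (hP P hP')).isPolyhedron

lemma isPolyhedron_bnd (hP : IsConvexPolyhedral P) (hQ : IsConvexPolyhedral Q) :
    IsPolyhedron (bnd P Q) :=
  (hP.closure.inter hQ).isPolyhedron.union (hP.inter hQ.closure).isPolyhedron

/-- The set that the closure condition of `TauClosed` adds for the pair `P`, `Q`: the paper's
`τ`-step. -/
def tauStep (F P Q : Set (Vec n)) : Set (Vec n) := P ∩ preflow F (bnd P Q ∩ preflow F Q)

lemma isPolyhedron_tauStep (hF : IsConvexPolyhedron F) (hFne : F.Nonempty)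
    (hP : IsConvexPolyhedral P) (hQ : IsConvexPolyhedral Q) : IsPolyhedron (tauStep F P Q) :=
  hP.isPolyhedron.inter
    (((isPolyhedron_bnd hP hQ).inter (hQ.isPolyhedron.preflow hF hFne)).preflow hF hFne)

end Preflow

section Segments
variable {E : Type*} [NormedAddCommGroup E] [NormedSpace ℝ E]

lemma exists_lastExit_segment {D : Set E} {x c : E} {d : ℝ}
    (hT : ∃ t ∈ Icc 0 d, x + t • c ∈ D) :
    ∃ s ∈ Icc 0 d, x + s • c ∈ closure D ∧ ∀ t ∈ Ioc s d, x + t • c ∉ D := by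
  set T := {t ∈ Icc 0 d | x + t • c ∈ D}
  have hbdd : BddAbove T := ⟨d, fun t ht => ht.1.2⟩
  obtain ⟨t₀, ht₀⟩ := hT
  refine ⟨sSup T, ⟨ht₀.1.1.trans (le_csSup hbdd ht₀), csSup_le ⟨t₀, ht₀⟩ fun t ht => ht.1.2⟩,
    ?_, fun t ht htD => (le_csSup hbdd ⟨⟨?_, ht.2⟩, htD⟩).not_gt ht.1⟩
  · have hcont : Continuous fun t : ℝ => x + t • c := by fun_prop
    exact closure_mono (image_subset_iff.2 fun t ht => ht.2)
      (image_closure_subset_closure_image hcont ⟨_, csSup_mem_closure ⟨t₀, ht₀⟩ hbdd, rfl⟩)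
  · exact (ht₀.1.1.trans (le_csSup hbdd ht₀)).trans ht.1.le

lemma exists_mem_closure_and_add_smul_mem {Ps : Set (Set E)} (hPs : Ps.Finite) {z v : E}
    (h : ∀ᶠ r in 𝓝[>] (0 : ℝ), z + r • v ∈ ⋃₀ Ps) :
    ∃ Q ∈ Ps, z ∈ closure Q ∧ ∃ r : ℝ, 0 < r ∧ z + r • v ∈ Q := by
  have hfreq : ∃ᶠ r in 𝓝[>] (0 : ℝ), ∃ Q ∈ Ps, z + r • v ∈ Q := by
    simpa only [mem_sUnion] using h.frequently
  obtain ⟨Q, hQ, hfreq⟩ := (hPs.frequently_exists).1 hfreq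
  have hlim : Tendsto (fun r : ℝ => z + r • v) (𝓝[>] 0) (𝓝 z) := by
    have : Continuous fun r : ℝ => z + r • v := by fun_prop
    simpa using (this.tendsto 0).mono_left nhdsWithin_le_nhds
  obtain ⟨r, hrQ, hr⟩ := (hfreq.and_eventually self_mem_nhdsWithin).exists
  exact ⟨Q, hQ, mem_closure_iff_frequently.2 (hlim.frequently hfreq), r, hr, hrQ⟩

end Segments

section Paths
variable {n : ℕ} {F U V D : Set (Vec n)}

/-- The end point of the path from `x` that moves, for each `(d, c)` of the list in turn, with
velocity `c` for time `d`. -/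
def endpoint : Vec n → List (ℝ × Vec n) → Vec n
  | x, [] => x
  | x, p :: L => endpoint (x + p.1 • p.2) L

/-- The points that this path visits at positive times. -/
def trace : Vec n → List (ℝ × Vec n) → Set (Vec n)
  | _, [] => ∅
  | x, p :: L => (fun t => x + t • p.2) '' Ioc 0 p.1 ∪ trace (x + p.1 • p.2) L

def Admissible (F : Set (Vec n)) (L : List (ℝ × Vec n)) : Prop := ∀ p ∈ L, 0 ≤ p.1 ∧ p.2 ∈ F

lemma admissible_cons {p : ℝ × Vec n} {L : List (ℝ × Vec n)} :
    Admissible F (p :: L) ↔ (0 ≤ p.1 ∧ p.2 ∈ F) ∧ Admissible F L :=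
  List.forall_mem_cons

lemma insert_trace_cons {x c : Vec n} {d : ℝ} (hd : 0 ≤ d) (L : List (ℝ × Vec n)) :
    insert x (trace x ((d, c) :: L)) =
      (fun t => x + t • c) '' Icc 0 d ∪ insert (x + d • c) (trace (x + d • c) L) := by
  ext y
  simp only [trace, mem_insert_iff, mem_union, mem_image, mem_Icc, mem_Ioc]
  constructor
  · rintro (rfl | ⟨t, ⟨ht, htd⟩, rfl⟩ | hy)
    · exact .inl ⟨0, ⟨le_rfl, hd⟩, by simp⟩
    · exact .inl ⟨t, ⟨ht.le, htd⟩, rfl⟩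
    · exact .inr (.inr hy)
  · rintro (⟨t, ⟨ht, htd⟩, rfl⟩ | rfl | hy)
    · rcases ht.eq_or_lt with rfl | ht
      · exact .inl (by simp)
      · exact .inr (.inl ⟨t, ⟨ht, htd⟩, rfl⟩)
    · rcases hd.eq_or_lt with rfl | hd
      · exact .inl (by simp)
      · exact .inr (.inl ⟨d, ⟨hd, le_rfl⟩, rfl⟩)
    · exact .inr (.inr hy)

lemma mem_prwa_of_mem {u : Vec n} (hu : u ∈ U) : u ∈ prwa F U V :=
  ⟨0, Fin.elim0, Fin.elim0, fun _ => u, nofun, nofun, rfl, nofun, hu, nofun⟩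

lemma mem_prwa_cons {u c : Vec n} {d : ℝ} (hd : 0 ≤ d) (hc : c ∈ F)
    (hsafe : ∀ t ∈ Icc 0 d, u + t • c ∈ Vᶜ ∪ U) (h : u + d • c ∈ prwa F U V) :
    u ∈ prwa F U V := by
  obtain ⟨k, ds, cs, p, hds, hcs, hp0, hp, hlast, hsafe'⟩ := h
  refine ⟨k + 1, Fin.cons d ds, Fin.cons c cs, Fin.cons u p, Fin.cases hd hds, Fin.cases hc hcs,
    rfl, Fin.cases (by simp [hp0]) fun i => ?_, by simpa [← Fin.succ_last] using hlast,
    Fin.cases (fun t ht ht' => .inr (hsafe t ⟨ht, ht'⟩)) fun i => ?_⟩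
  · simpa [← Fin.succ_castSucc] using hp i
  · simpa [← Fin.succ_castSucc, ← Fin.succ_last] using hsafe' i

lemma mem_prwa_iff {u : Vec n} : u ∈ prwa F U V ↔
    ∃ L, Admissible F L ∧ endpoint u L ∈ U ∧ insert u (trace u L) ⊆ Vᶜ ∪ U := by
  constructor
  · rintro ⟨k, d, c, p, hd, hc, hp0, hp, hlast, hsafe⟩
    induction k generalizing u with
    | zero =>
      have hu : u ∈ U := by simpa [← hp0] using hlast
      exact ⟨[], nofun, hu, by simp [trace, hu]⟩
    | succ k ih =>
      have hp1 : p 1 = u + d 0 • c 0 := by simpa [hp0] using hp 0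
      obtain ⟨L, hL, hend, hsub⟩ := ih (d ∘ Fin.succ) (c ∘ Fin.succ) (p ∘ Fin.succ)
        (fun i => hd i.succ) (fun i => hc i.succ) rfl (fun i => by simpa using hp i.succ)
        (by simpa using hlast) (fun i t ht ht' => by simpa using hsafe i.succ t ht ht')
      refine ⟨(d 0, c 0) :: L, admissible_cons.2 ⟨⟨hd 0, hc 0⟩, hL⟩, by simpa [endpoint, ← hp1]
        using hend, ?_⟩
      rw [insert_trace_cons (hd 0), ← hp1]
      refine union_subset ?_ hsub
      rintro _ ⟨t, ⟨ht, ht'⟩, rfl⟩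
      rcases hsafe 0 t ht ht' with h | h
      · rw [Fin.castSucc_zero, hp0] at h
        exact .inr (show u + t • c 0 ∈ U from h ▸ hlast)
      · simpa [hp0] using h
  · rintro ⟨L, hL, hend, hsub⟩
    induction L generalizing u with
    | nil => exact mem_prwa_of_mem hend
    | cons p L ih =>
      obtain ⟨d, c⟩ := p
      rw [admissible_cons] at hL
      rw [insert_trace_cons hL.1.1] at hsub
      exact mem_prwa_cons hL.1.1 hL.1.2 (fun t ht => hsub (.inl ⟨t, ht, rfl⟩))
        (ih hL.2 hend (subset_union_right.trans hsub))


/-- The segments before the last exit from `D` merge into one, as `F` is convex. -/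
lemma exists_lastExit (hF : Convex ℝ F) (hFne : F.Nonempty) :
    ∀ {x : Vec n} {L : List (ℝ × Vec n)}, Admissible F L → (insert x (trace x L) ∩ D).Nonempty →
    ∃ δ : ℝ, 0 ≤ δ ∧ ∃ c ∈ F, ∃ L', Admissible F L' ∧ endpoint (x + δ • c) L' = endpoint x L ∧
      x + δ • c ∈ closure D ∩ insert x (trace x L) ∧ trace (x + δ • c) L' ⊆ trace x L \ D
  | x, [], _, hD => by
    obtain ⟨y, hy, hyD⟩ := hD
    obtain rfl : y = x := by simpa [trace] using hy
    have hyD' : y + (0 : ℝ) • hFne.some ∈ closure D := by simpa using subset_closure hyD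
    exact ⟨0, le_rfl, hFne.some, hFne.some_mem, [], nofun, by simp, ⟨hyD', by simp⟩,
      by simp [trace]⟩
  | x, (d, c) :: L, hL, hD => by
    rw [admissible_cons] at hL
    have hsub : insert (x + d • c) (trace (x + d • c) L) ⊆ insert x (trace x ((d, c) :: L)) := by
      rw [insert_trace_cons hL.1.1]
      exact subset_union_right
    by_cases hrest : (insert (x + d • c) (trace (x + d • c) L) ∩ D).Nonempty
    · obtain ⟨δ, hδ, c', hc', L', hL', hend, ⟨hzD, hz⟩, htr⟩ := exists_lastExit hF hFne hL.2 hrest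
      obtain ⟨c'', hc'', hcomb⟩ : d • c + δ • c' ∈ (d + δ) • F := by
        rw [hF.add_smul hL.1.1 hδ]
        exact add_mem_add (smul_mem_smul_set hL.1.2) (smul_mem_smul_set hc')
      have hz' : x + (d + δ) • c'' = x + d • c + δ • c' := by rw [add_assoc, ← hcomb]
      refine ⟨d + δ, add_nonneg hL.1.1 hδ, c'', hc'', L', hL', ?_, ?_, ?_⟩ <;> rw [hz']
      · exact hend
      · exact ⟨hzD, hsub hz⟩
      · exact htr.trans (sdiff_subset_sdiff_left subset_union_right)
    · obtain ⟨s, ⟨hs, hsd⟩, hsD, hafter⟩ := exists_lastExit_segment (D := D) (x := x) (c := c)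
        (d := d) (by
          obtain ⟨y, hy, hyD⟩ := hD
          rw [insert_trace_cons hL.1.1] at hy
          rcases hy with ⟨t, ht, rfl⟩ | hy
          exacts [⟨t, ht, hyD⟩, absurd ⟨y, hy, hyD⟩ hrest])
      have hend : x + s • c + (d - s) • c = x + d • c := by module
      refine ⟨s, hs, c, hL.1.2, (d - s, c) :: L, admissible_cons.2 ⟨⟨sub_nonneg.2 hsd, hL.1.2⟩,
        hL.2⟩, by simp [endpoint, hend], ⟨hsD, ?_⟩, ?_⟩
      · rw [insert_trace_cons hL.1.1]
        exact .inl ⟨s, ⟨hs, hsd⟩, rfl⟩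
      · simp only [trace, hend]
        refine union_subset ?_ fun y hy => ⟨.inr hy, fun hyD => hrest ⟨y, .inr hy, hyD⟩⟩
        rintro _ ⟨t, ⟨ht, htd⟩, rfl⟩
        have hst : x + s • c + t • c = x + (s + t) • c := by module
        dsimp only
        rw [hst]
        exact ⟨.inl ⟨s + t, ⟨by linarith, by linarith⟩, rfl⟩,
          hafter _ ⟨by linarith, by linarith⟩⟩

lemma exists_forall_mem_Ioc_add_smul :
    ∀ {z : Vec n} {L : List (ℝ × Vec n)}, Admissible F L → endpoint z L ≠ z →
    ∃ c ∈ F, ∃ ε : ℝ, 0 < ε ∧ ∀ r ∈ Ioc 0 ε, ∃ L', Admissible F L' ∧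
      endpoint (z + r • c) L' = endpoint z L ∧ insert (z + r • c) (trace (z + r • c) L') ⊆ trace z L
  | z, [], _, hne => absurd rfl hne
  | z, (d, c) :: L, hL, hne => by
    rw [admissible_cons] at hL
    rcases hL.1.1.eq_or_lt with rfl | hd
    · obtain ⟨c', hc', ε, hε, h⟩ :=
        exists_forall_mem_Ioc_add_smul hL.2 (by simpa [endpoint] using hne)
      refine ⟨c', hc', ε, hε, fun r hr => ?_⟩
      obtain ⟨L', hL', hend, htr⟩ := h r hr
      exact ⟨L', hL', by simpa [endpoint] using hend, htr.trans (by simp [trace])⟩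
    refine ⟨c, hL.1.2, d, hd, fun r ⟨hr, hrd⟩ => ⟨(d - r, c) :: L,
      admissible_cons.2 ⟨⟨sub_nonneg.2 hrd, hL.1.2⟩, hL.2⟩, ?_, ?_⟩⟩
    · have : z + r • c + (d - r) • c = z + d • c := by module
      simp [endpoint, this]
    · have hend : z + r • c + (d - r) • c = z + d • c := by module
      rw [insert_trace_cons (sub_nonneg.2 hrd), hend]
      refine union_subset ?_ (insert_subset (.inl ⟨d, ⟨hd, le_rfl⟩, rfl⟩) subset_union_right)
      rintro _ ⟨t, ⟨ht, htd⟩, rfl⟩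
      exact .inl ⟨r + t, ⟨by linarith, by linarith⟩, by module⟩

lemma prwa_subset : prwa F U V ⊆ Vᶜ ∪ U := fun _ hu =>
  (mem_prwa_iff.1 hu).choose_spec.2.2 (mem_insert _ _)

lemma tauStep_subset_prwa (P Q : Set (Vec n)) (hP : IsConvexPolyhedron P) (hPV : P ⊆ Vᶜ)
    (hQ : IsConvexPolyhedron Q) (hQW : Q ⊆ prwa F U V) : tauStep F P Q ⊆ prwa F U V := by
  rw [isConvexPolyhedron_iff] at hP hQ
  rintro u ⟨huP, δ, hδ, c, hc, hzb, δ', hδ', c', hc', hw⟩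
  have hz : u + δ • c ∈ prwa F U V := by
    refine mem_prwa_cons hδ' hc' (fun t ⟨ht, htδ⟩ => ?_) (hQW hw)
    rcases htδ.lt_or_eq with htδ | rfl
    · rcases hzb with ⟨-, hzQ⟩ | ⟨hzP, hzQ⟩
      · exact prwa_subset (hQW (hQ.add_smul_mem hzQ (subset_closure hw) ht htδ))
      · rcases ht.eq_or_lt with rfl | ht
        · exact .inl (hPV (by simpa using hzP))
        · have := hQ.add_smul_mem hw (v := -c') (by simpa using hzQ) (sub_nonneg.2 htδ.le)
            (sub_lt_self _ ht)
          exact prwa_subset (hQW (by convert this using 1; module))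
    · exact prwa_subset (hQW hw)
  refine mem_prwa_cons hδ hc (fun t ⟨ht, htδ⟩ => ?_) hz
  rcases htδ.lt_or_eq with htδ | rfl
  · have hzP : u + δ • c ∈ closure P := by
      rcases hzb with ⟨hzP, -⟩ | ⟨hzP, -⟩
      exacts [hzP, subset_closure hzP]
    exact .inl (hPV (hP.add_smul_mem huP hzP ht htδ))
  · exact prwa_subset hz

end Paths

section Stages
variable {n : ℕ} {F U V : Set (Vec n)} {Ds : Finset (Set (Vec n))}

noncomputable def stage (F U : Set (Vec n)) (Ds : Finset (Set (Vec n))) : ℕ → Set (Vec n)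
  | 0 => U
  | m + 1 => stage F U Ds m ∪ ⋃ D ∈ Ds, ⋃ Q ∈ pieces (stage F U Ds m), tauStep F D Q

lemma stage_mono : Monotone (stage F U Ds) :=
  monotone_nat_of_le_succ fun _ => subset_union_left

lemma subset_stage (m : ℕ) : U ⊆ stage F U Ds m :=
  stage_mono (Nat.zero_le m)

lemma isPolyhedron_stage (hF : IsConvexPolyhedron F) (hFne : F.Nonempty) (hU : IsPolyhedron U)
    (hDs : ∀ D ∈ Ds, IsConvexPolyhedral D) : ∀ m, IsPolyhedron (stage F U Ds m)
  | 0 => hU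
  | m + 1 => by
    have spec := (isPolyhedron_stage hF hFne hU hDs m).pieces_spec
    exact (isPolyhedron_stage hF hFne hU hDs m).union (.biUnion Ds.finite_toSet fun D hD =>
      .biUnion spec.1 fun Q hQ => isPolyhedron_tauStep hF hFne (hDs D hD) (spec.2.1 Q hQ))

lemma stage_subset (hF : IsConvexPolyhedron F) (hFne : F.Nonempty) (hU : IsPolyhedron U)
    (hDs : ∀ D ∈ Ds, IsConvexPolyhedral D) (hVc : Vᶜ = ⋃₀ (Ds : Set (Set (Vec n))))
    {W : Set (Vec n)} (hUW : U ⊆ W) (hW : ∀ P Q, IsConvexPolyhedron P → P ⊆ Vᶜ →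
      IsConvexPolyhedron Q → Q ⊆ W → tauStep F P Q ⊆ W) : ∀ m, stage F U Ds m ⊆ W
  | 0 => hUW
  | m + 1 => by
    have ih := stage_subset hF hFne hU hDs hVc hUW hW m
    have spec := (isPolyhedron_stage hF hFne hU hDs m).pieces_spec
    refine union_subset ih (iUnion₂_subset fun D hD => iUnion₂_subset fun Q hQ => ?_)
    exact hW D Q (isConvexPolyhedron_iff.2 (hDs D hD)) (hVc ▸ subset_sUnion_of_mem hD)
      (isConvexPolyhedron_iff.2 (spec.2.1 Q hQ)) ((subset_sUnion_of_mem hQ).trans (spec.2.2 ▸ ih))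

/-- If `z ∉ W`, then `z ∈ D` and the path leaves `z` along a segment whose points near `z` lie,
frequently, in a single piece of `W`. -/
lemma exists_mem_pieces_bnd (hFne : F.Nonempty) {W : Set (Vec n)} (hW : IsPolyhedron W)
    (hUW : U ⊆ W) {S D : Set (Vec n)} (hreach : ∀ y L, Admissible F L → endpoint y L ∈ U →
      insert y (trace y L) ⊆ S \ D → y ∈ W)
    {z : Vec n} {L : List (ℝ × Vec n)} (hL : Admissible F L) (hend : endpoint z L ∈ U)
    (hz : z ∈ closure D ∩ S) (htr : trace z L ⊆ S \ D) :
    ∃ Q ∈ pieces W, z ∈ bnd D Q ∩ preflow F Q := by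
  have spec := hW.pieces_spec
  by_cases hzW : z ∈ W
  · rw [spec.2.2] at hzW
    obtain ⟨Q, hQ, hzQ⟩ := hzW
    exact ⟨Q, hQ, .inl ⟨hz.1, hzQ⟩, 0, le_rfl, hFne.some, hFne.some_mem, by simpa using hzQ⟩
  have hzD : z ∈ D := by_contra fun hzD => hzW (hreach z L hL hend (insert_subset ⟨hz.2, hzD⟩ htr))
  have hne : endpoint z L ≠ z := fun h => hzW (hUW (h ▸ hend))
  obtain ⟨c, hc, ε, hε, hstart⟩ := exists_forall_mem_Ioc_add_smul hL hne
  have hnear : ∀ᶠ r in 𝓝[>] (0 : ℝ), z + r • c ∈ ⋃₀ pieces W := by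
    filter_upwards [Ioc_mem_nhdsGT hε] with r hr
    obtain ⟨L', hL', hend', hsub⟩ := hstart r hr
    rw [← spec.2.2]
    exact hreach _ L' hL' (hend' ▸ hend) (hsub.trans htr)
  obtain ⟨Q, hQ, hzQ, r, hr, hrQ⟩ := exists_mem_closure_and_add_smul_mem spec.1 hnear
  exact ⟨Q, hQ, .inr ⟨hzD, hzQ⟩, r, hr.le, c, hc, hrQ⟩

/-- Induction on the number of pieces of `Vᶜ` a path may use: after the last exit from the piece
containing its start, the path uses one piece fewer. -/
lemma mem_stage_of_path (hF : IsConvexPolyhedron F) (hFne : F.Nonempty) (hU : IsPolyhedron U)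
    (hDs : ∀ D ∈ Ds, IsConvexPolyhedral D) (m : ℕ) :
    ∀ A ⊆ Ds, A.card ≤ m → ∀ x L, Admissible F L → endpoint x L ∈ U →
      insert x (trace x L) ⊆ U ∪ ⋃ D ∈ A, D → x ∈ stage F U Ds m := by
  classical
  induction m with
  | zero =>
    intro A _ hA x L _ _ hsub
    have hx := hsub (mem_insert x _)
    exact subset_stage 0 (by simpa [Finset.card_eq_zero.1 (Nat.le_zero.1 hA)] using hx)
  | succ m ih =>
    intro A hADs hA x L hL hend hsub
    obtain hxU | hxA := hsub (mem_insert x _)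
    · exact subset_stage _ hxU
    obtain ⟨D, hDA, hxD⟩ := mem_iUnion₂.1 hxA
    have hreach : ∀ y L', Admissible F L' → endpoint y L' ∈ U →
        insert y (trace y L') ⊆ insert x (trace x L) \ D → y ∈ stage F U Ds m := by
      refine fun y L' hL' hend' hsub' => ih (A.erase D) ((A.erase_subset D).trans hADs)
        (by rw [Finset.card_erase_of_mem hDA]; omega) y L' hL' hend' fun w hw => ?_
      obtain ⟨hwS, hwD⟩ := hsub' hw
      refine (hsub hwS).imp id fun hwA => ?_
      obtain ⟨D', hD'A, hwD'⟩ := mem_iUnion₂.1 hwA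
      exact mem_iUnion₂.2 ⟨D', Finset.mem_erase.2 ⟨fun h => hwD (h ▸ hwD'), hD'A⟩, hwD'⟩
    obtain ⟨δ, hδ, c, hc, L', hL', hend', hz, htr⟩ :=
      exists_lastExit (isConvexPolyhedron_iff.1 hF).convex hFne hL ⟨x, mem_insert x _, hxD⟩
    obtain ⟨Q, hQ, hzQ⟩ := exists_mem_pieces_bnd hFne (isPolyhedron_stage hF hFne hU hDs m)
      (subset_stage m) hreach hL' (hend' ▸ hend) hz
      (htr.trans (sdiff_subset_sdiff_left (subset_insert _ _)))
    exact .inr (mem_iUnion₂.2 ⟨D, hADs hDA, mem_iUnion₂.2 ⟨Q, hQ, hxD, δ, hδ, c, hc, hzQ⟩⟩)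

lemma prwa_eq_stage (hF : IsConvexPolyhedron F) (hFne : F.Nonempty) (hU : IsPolyhedron U)
    (hDs : ∀ D ∈ Ds, IsConvexPolyhedral D) (hVc : Vᶜ = ⋃₀ (Ds : Set (Set (Vec n)))) :
    prwa F U V = stage F U Ds Ds.card := by
  refine Subset.antisymm (fun u hu => ?_) (stage_subset hF hFne hU hDs hVc
    (fun _ => mem_prwa_of_mem) tauStep_subset_prwa _)
  obtain ⟨L, hL, hend, hsub⟩ := mem_prwa_iff.1 hu
  refine mem_stage_of_path hF hFne hU hDs _ _ subset_rfl le_rfl u L hL hend fun y hy => ?_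
  rcases hsub hy with hyV | hyU
  · rw [hVc] at hyV
    obtain ⟨D, hD, hyD⟩ := hyV
    exact .inr (mem_iUnion₂.2 ⟨D, hD, hyD⟩)
  · exact .inl hyU

end Stages

/-- For a nonempty convex polyhedron `F` and polyhedra `U, V`,
`prwa_F(U, V)` is the least `τ`-closed subset of `ℝ^n`. -/
theorem prwa_least_tauClosed {n : ℕ} (F U V : Set (Vec n))
    (hF : IsConvexPolyhedron F) (hFne : F.Nonempty)
    (hU : IsPolyhedron U) (hV : IsPolyhedron V) :
    TauClosed F U V (prwa F U V) ∧ ∀ W : Set (Vec n), TauClosed F U V W → prwa F U V ⊆ W := by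
  obtain ⟨Ds, hDs, hD, hVc⟩ := isPolyhedron_iff.1 hV.compl
  lift Ds to Finset (Set (Vec n)) using hDs
  have hprwa := prwa_eq_stage hF hFne hU hD hVc
  refine ⟨⟨fun _ => mem_prwa_of_mem, hprwa ▸ isPolyhedron_stage hF hFne hU hD _,
    tauStep_subset_prwa⟩, fun W hW => ?_⟩
  rw [hprwa]
  exact stage_subset hF hFne hU hD hVc hW.1 hW.2.2 _
end

section
/- Let F ⊆ ℝ^n be a convex polyhedron, V ⊆ ℝ^n a polyhedron, and u, v ∈ ℝ^n. Suppose there is a differentiable function f : [0,∞) → ℝ^n with f(0) = u and f'(t) ∈ F for all t ≥ 0, and a time δ ≥ 0 such that f(δ) = v and f(t) ∉ V for all 0 ≤ t ≤ δ. Then there exist k ≥ 0, durations δ_1, …, δ_k ≥ 0, vectors c_1, …, c_k ∈ F, and points u_0 = u, u_i = u_{i-1} + δ_i·c_i with u_k = v, such that every point u_{i-1} + t·c_i with 0 ≤ t ≤ δ_i avoids V (i.e., the piecewise straight-line trajectory from u to v with slopes in F avoids V). -/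
open Set

/-!
A point `x ∉ V` has a neighbourhood in which every `y ∉ V` is
joined to `x` by a segment avoiding `V`: near `x`, the inequalities strictly satisfied at `x`
stay satisfied, and the complement of a half-space is convex. Along the continuous curve `f`,
a supremum argument then cuts `[0, δ]` into finitely many intervals `[s, t]` whose chords from
`f s` to `f t` avoid `V`. The slope of each chord lies in `F` by the mean value theorem, applied
to each linear inequality defining `F`.
-/

open Filter Topology Relation

section Polyhedra

variable {ι : Type} [Fintype ι]

theorem dotProduct_one_sub_smul_add_smul (a x y : ι → ℝ) (θ : ℝ) :
    a ⬝ᵥ ((1 - θ) • x + θ • y) = (1 - θ) * a ⬝ᵥ x + θ * a ⬝ᵥ y := by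
  simp only [dotProduct_add, dotProduct_smul, smul_eq_mul]

-- `x` itself may lie on the boundary of a closed half-space, so the segment can meet `H` there.
theorem IsHalfspace.eventually_segment_inter_subset {H : Set (ι → ℝ)} (hH : IsHalfspace H)
    (x : ι → ℝ) : ∀ᶠ y in 𝓝 x, y ∉ H → segment ℝ x y ∩ H ⊆ {x} := by
  obtain ⟨a, b, hH⟩ := hH
  by_cases hx : a ⬝ᵥ x < b
  · have hcont : Continuous (a ⬝ᵥ ·) := continuous_const.dotProduct continuous_id
    filter_upwards [(isOpen_lt hcont continuous_const).mem_nhds hx] with y hy hyH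
    rcases hH with rfl | rfl
    exacts [absurd hy hyH, absurd hy.le hyH]
  refine Eventually.of_forall fun y hyH z ⟨hz, hzH⟩ => ?_
  rw [segment_eq_image] at hz
  obtain ⟨θ, ⟨hθ0, hθ1⟩, rfl⟩ := hz
  rcases hH with rfl | rfl
  · have hy : b ≤ a ⬝ᵥ y := not_lt.1 hyH
    have hz : a ⬝ᵥ ((1 - θ) • x + θ • y) < b := hzH
    rw [dotProduct_one_sub_smul_add_smul] at hz
    nlinarith
  · have hy : b < a ⬝ᵥ y := not_le.1 hyH
    have hz : a ⬝ᵥ ((1 - θ) • x + θ • y) ≤ b := hzH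
    rw [dotProduct_one_sub_smul_add_smul] at hz
    obtain rfl : θ = 0 := by nlinarith
    simp

theorem IsConvexPolyhedron.eventually_segment_subset_compl {P : Set (ι → ℝ)}
    (hP : IsConvexPolyhedron P) {x : ι → ℝ} (hx : x ∉ P) :
    ∀ᶠ y in 𝓝 x, y ∉ P → segment ℝ x y ⊆ Pᶜ := by
  obtain ⟨k, Hs, hHs, rfl⟩ := hP
  filter_upwards [eventually_all.2 fun i => (hHs i).eventually_segment_inter_subset x]
    with y hy hyP z hz hzP
  obtain ⟨i, hyi⟩ : ∃ i, y ∉ Hs i := by simpa only [mem_iInter, not_forall] using hyP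
  obtain rfl : z = x := hy i hyi ⟨hz, mem_iInter.1 hzP i⟩
  exact hx hzP

theorem IsPolyhedron.eventually_segment_subset_compl {P : Set (ι → ℝ)}
    (hP : IsPolyhedron P) {x : ι → ℝ} (hx : x ∉ P) :
    ∀ᶠ y in 𝓝 x, y ∉ P → segment ℝ x y ⊆ Pᶜ := by
  obtain ⟨k, Ps, hPs, rfl⟩ := hP
  simp only [mem_iUnion, not_exists] at hx
  filter_upwards [eventually_all.2 fun i => (hPs i).eventually_segment_subset_compl (hx i)]
    with y hy hyP z hz hzP
  simp only [mem_iUnion, not_exists] at hyP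
  obtain ⟨i, hzi⟩ := mem_iUnion.1 hzP
  exact hy i (hyP i) hz hzi

theorem HasDerivAt.const_dotProduct {f : ℝ → ι → ℝ} {f' : ι → ℝ} {t : ℝ}
    (hf : HasDerivAt f f' t) (a : ι → ℝ) : HasDerivAt (fun s => a ⬝ᵥ f s) (a ⬝ᵥ f') t :=
  HasDerivAt.fun_sum fun i _ => (hasDerivAt_pi.1 hf i).const_mul (a i)

theorem IsHalfspace.slope_mem {H : Set (ι → ℝ)} (hH : IsHalfspace H) {f f' : ℝ → ι → ℝ}
    {s t : ℝ} (hst : s < t) (hfc : ContinuousOn f (Icc s t))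
    (hf : ∀ ξ ∈ Ioo s t, HasDerivAt f (f' ξ) ξ) (hf' : ∀ ξ ∈ Ioo s t, f' ξ ∈ H) :
    slope f s t ∈ H := by
  obtain ⟨a, b, hH⟩ := hH
  have hdotc : ContinuousOn (fun r => a ⬝ᵥ f r) (Icc s t) :=
    (continuous_const.dotProduct continuous_id).comp_continuousOn hfc
  obtain ⟨ξ, hξ, hslope⟩ := exists_hasDerivAt_eq_slope (fun r => a ⬝ᵥ f r) (fun r => a ⬝ᵥ f' r)
    hst hdotc fun r hr => (hf r hr).const_dotProduct a
  have hdot : a ⬝ᵥ slope f s t = a ⬝ᵥ f' ξ := by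
    rw [hslope, slope_def_module, dotProduct_smul, dotProduct_sub, smul_eq_mul, inv_mul_eq_div]
  have hξH := hf' ξ hξ
  rcases hH with rfl | rfl
  · exact (hdot.trans_lt hξH :)
  · exact (hdot.trans_le hξH :)

theorem IsConvexPolyhedron.slope_mem {P : Set (ι → ℝ)} (hP : IsConvexPolyhedron P)
    {f f' : ℝ → ι → ℝ} {s t : ℝ} (hst : s < t) (hfc : ContinuousOn f (Icc s t))
    (hf : ∀ ξ ∈ Ioo s t, HasDerivAt f (f' ξ) ξ) (hf' : ∀ ξ ∈ Ioo s t, f' ξ ∈ P) :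
    slope f s t ∈ P := by
  obtain ⟨k, Hs, hHs, rfl⟩ := hP
  exact mem_iInter.2 fun i => (hHs i).slope_mem hst hfc hf fun ξ hξ => mem_iInter.1 (hf' ξ hξ) i

end Polyhedra

theorem Real.reflTransGen_of_eventually {R : ℝ → ℝ → Prop} {a b : ℝ} (hab : a ≤ b)
    (hR : ∀ t ∈ Icc a b, ∀ᶠ s in 𝓝 t, s ∈ Icc a b → (s ≤ t → R s t) ∧ (t ≤ s → R t s)) :
    ReflTransGen R a b := by
  set A := {t ∈ Icc a b | ReflTransGen R a t}
  have haA : a ∈ A := ⟨left_mem_Icc.2 hab, .refl⟩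
  have hA : BddAbove A := ⟨b, fun t ht => ht.1.2⟩
  set T := sSup A
  have hT : T ∈ Icc a b := ⟨le_csSup hA haA, csSup_le ⟨a, haA⟩ fun t ht => ht.1.2⟩
  obtain ⟨ε, hε, hball⟩ := Metric.eventually_nhds_iff.1 (hR T hT)
  have hTA : ReflTransGen R a T := by
    obtain ⟨s, hsA, hs⟩ := exists_lt_of_lt_csSup ⟨a, haA⟩ (sub_lt_self T hε)
    have hsT : s ≤ T := le_csSup hA hsA
    refine hsA.2.tail ((hball ?_ hsA.1).1 hsT)
    rw [Real.dist_eq, abs_lt]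
    constructor <;> linarith
  obtain hTb | hTb := hT.2.eq_or_lt
  · rwa [← hTb]
  set T' := min b (T + ε / 2)
  have hTT' : T < T' := lt_min hTb (by linarith)
  have hT' : T' ∈ Icc a b := ⟨hT.1.trans hTT'.le, min_le_left _ _⟩
  have hdist : dist T' T < ε := by
    rw [Real.dist_eq, abs_lt]
    constructor <;> linarith [min_le_right b (T + ε / 2)]
  have hT'A : T' ∈ A := ⟨hT', hTA.tail ((hball hdist hT').2 hTT'.le)⟩
  exact absurd (le_csSup hA hT'A) (not_le.2 hTT')

section StraightlineReachable

variable {E : Type*} [AddCommGroup E] [Module ℝ E]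

def StraightlineReachable (F V : Set E) (u v : E) : Prop :=
  ∃ (k : ℕ) (d : Fin k → ℝ) (c : Fin k → E) (p : Fin (k + 1) → E),
    (∀ i, 0 ≤ d i) ∧ (∀ i, c i ∈ F) ∧ p 0 = u ∧ p (Fin.last k) = v ∧
    (∀ i : Fin k, p i.succ = p i.castSucc + d i • c i) ∧
    (∀ (i : Fin k) (t : ℝ), 0 ≤ t → t ≤ d i → p i.castSucc + t • c i ∉ V)

variable {F V : Set E}

theorem StraightlineReachable.refl (u : E) : StraightlineReachable F V u u :=
  ⟨0, Fin.elim0, Fin.elim0, fun _ => u, fun i => i.elim0, fun i => i.elim0, rfl, rfl,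
    fun i => i.elim0, fun i => i.elim0⟩

theorem StraightlineReachable.snoc {u v c : E} {d : ℝ} (h : StraightlineReachable F V u v)
    (hd : 0 ≤ d) (hc : c ∈ F) (hV : ∀ t, 0 ≤ t → t ≤ d → v + t • c ∉ V) :
    StraightlineReachable F V u (v + d • c) := by
  obtain ⟨k, ds, cs, p, hds, hcs, hp0, hpk, hstep, havoid⟩ := h
  refine ⟨k + 1, Fin.snoc ds d, Fin.snoc cs c, Fin.snoc p (v + d • c), ?_, ?_, ?_, ?_, ?_, ?_⟩
  · exact Fin.lastCases (by simpa) (by simpa)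
  · exact Fin.lastCases (by simpa) (by simpa)
  · rwa [Fin.snoc_apply_zero]
  · exact Fin.snoc_last _ _
  · refine Fin.lastCases ?_ fun i => ?_
    · rw [Fin.succ_last, Fin.snoc_last, Fin.snoc_castSucc, hpk, Fin.snoc_last, Fin.snoc_last]
    · simpa only [Fin.succ_castSucc, Fin.snoc_castSucc] using hstep i
  · refine Fin.lastCases ?_ fun i => ?_
    · simpa only [Fin.snoc_castSucc, Fin.snoc_last, hpk] using hV
    · simpa only [Fin.snoc_castSucc] using havoid i

theorem StraightlineReachable.add_segment {u v c : E} {d : ℝ} (h : StraightlineReachable F V u v)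
    (hd : 0 ≤ d) (hc : c ∈ F) (hV : segment ℝ v (v + d • c) ⊆ Vᶜ) :
    StraightlineReachable F V u (v + d • c) := by
  refine h.snoc hd hc fun t ht0 htd => hV ?_
  rw [segment_eq_image']
  refine ⟨t / d, ⟨div_nonneg ht0 hd, div_le_one_of_le₀ htd hd⟩, ?_⟩
  have htd : t / d * d = t := div_mul_cancel_of_imp fun hd0 => by linarith
  simp only [add_sub_cancel_left, smul_smul, htd]

end StraightlineReachable

theorem straightlineReachable_of_reflTransGen {ι : Type} [Fintype ι] {F V : Set (ι → ℝ)}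
    (hF : IsConvexPolyhedron F) {f : ℝ → ι → ℝ} (hf : Differentiable ℝ f)
    (hder : ∀ t, 0 ≤ t → deriv f t ∈ F) {T : ℝ}
    (h : ReflTransGen (fun s t => s ≤ t ∧ segment ℝ (f s) (f t) ⊆ Vᶜ) 0 T) :
    0 ≤ T ∧ StraightlineReachable F V (f 0) (f T) := by
  induction h with
  | refl => exact ⟨le_rfl, .refl _⟩
  | @tail s t _ hst ih =>
    obtain ⟨hs, hreach⟩ := ih
    obtain ⟨hst, hseg⟩ := hst
    refine ⟨hs.trans hst, ?_⟩
    obtain rfl | hst := hst.eq_or_lt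
    · exact hreach
    have hslope : slope f s t ∈ F :=
      hF.slope_mem hst hf.continuous.continuousOn (fun ξ _ => (hf ξ).hasDerivAt)
        fun ξ hξ => hder ξ (hs.trans hξ.1.le)
    have hft : f t = f s + (t - s) • slope f s t := by
      rw [add_comm]
      exact (sub_smul_slope_vadd f s t).symm
    rw [hft] at hseg ⊢
    exact hreach.add_segment (sub_nonneg.2 hst.le) hslope hseg

/-- If a differentiable trajectory with derivative in a convex polyhedron
`F` leads from `u` to `v` avoiding the polyhedron `V`, then there is a piecewise
straight-line trajectory with slopes in `F` from `u` to `v` avoiding `V`. -/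
theorem straightline_avoid {n : ℕ} (F V : Set (Vec n))
    (hF : IsConvexPolyhedron F) (hV : IsPolyhedron V) (u v : Vec n)
    (f : ℝ → Vec n) (hdiff : Differentiable ℝ f) (h0 : f 0 = u)
    (hder : ∀ t : ℝ, 0 ≤ t → deriv f t ∈ F)
    (δ : ℝ) (hδ : 0 ≤ δ) (hfv : f δ = v)
    (havoid : ∀ t : ℝ, 0 ≤ t → t ≤ δ → f t ∉ V) :
    ∃ (k : ℕ) (d : Fin k → ℝ) (c : Fin k → Vec n) (p : Fin (k + 1) → Vec n),
      (∀ i, 0 ≤ d i) ∧ (∀ i, c i ∈ F) ∧ p 0 = u ∧ p (Fin.last k) = v ∧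
      (∀ i : Fin k, p i.succ = p i.castSucc + d i • c i) ∧
      (∀ (i : Fin k) (t : ℝ), 0 ≤ t → t ≤ d i → p i.castSucc + t • c i ∉ V) := by
  have hchain : ReflTransGen (fun s t => s ≤ t ∧ segment ℝ (f s) (f t) ⊆ Vᶜ) 0 δ := by
    refine Real.reflTransGen_of_eventually hδ fun t ht => ?_
    have hseg := hV.eventually_segment_subset_compl (havoid t ht.1 ht.2)
    filter_upwards [hdiff.continuous.tendsto t hseg] with s hs hsδ
    have hsegment := hs (havoid s hsδ.1 hsδ.2)
    exact ⟨fun hle => ⟨hle, segment_symm ℝ (f s) (f t) ▸ hsegment⟩, fun hle => ⟨hle, hsegment⟩⟩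
  rw [← h0, ← hfv]
  exact (straightlineReachable_of_reflTransGen hF hdiff hder hchain).2
end

section
/- Let F ⊆ ℝ^n be a convex polyhedron, let U, V ⊆ ℝ^n be polyhedra, and let P ⊆ ℝ^n \ V and Q ⊆ prwa_F(U, V) be convex polyhedra. Then P ∩ preflow_F(bound(P, Q) ∩ preflow_F(Q)) ⊆ prwa_F(U, V). -/
open Set

private lemma sum_lin {n : ℕ} (a u c : Vec n) (s : ℝ) :
    ∑ i, a i * (u + s • c) i = (∑ i, a i * u i) + s * ∑ i, a i * c i := by
  rw [Finset.mul_sum, ← Finset.sum_add_distrib]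
  refine Finset.sum_congr rfl fun i _ => ?_
  simp only [Pi.add_apply, Pi.smul_apply, smul_eq_mul]
  ring

private lemma halfspace_le {n : ℕ} {H : Set (Vec n)} {a : Vec n} {b : ℝ}
    (h : H = {x | (∑ i, a i * x i) < b} ∨ H = {x | (∑ i, a i * x i) ≤ b}) :
    closure H ⊆ {x | (∑ i, a i * x i) ≤ b} := by
  apply closure_minimal
  · rcases h with h | h <;> subst h <;> intro x hx <;>
      simp only [mem_setOf_eq] at hx ⊢
    · exact hx.le
    · exact hx
  · exact isClosed_le (continuous_finset_sum _ fun i _ =>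
      continuous_const.mul (continuous_apply i)) continuous_const

/-- Segment lemma 1: interior point + closure endpoint stays inside. -/
private lemma cp_seg1 {n : ℕ} {C : Set (Vec n)} (hC : IsConvexPolyhedron C)
    {u c : Vec n} {δ t : ℝ} (hu : u ∈ C) (hw : u + δ • c ∈ closure C)
    (ht0 : 0 ≤ t) (htδ : t < δ) : u + t • c ∈ C := by
  obtain ⟨k, Hs, hHs, rfl⟩ := hC
  rw [mem_iInter] at hu ⊢
  intro i
  obtain ⟨a, b, hab⟩ := hHs i
  have hwi : u + δ • c ∈ closure (Hs i) := closure_mono (iInter_subset _ i) hw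
  have hle := halfspace_le hab hwi
  rw [mem_setOf_eq, sum_lin] at hle
  have hui := hu i
  rcases hab with h | h <;>
    (rw [h, mem_setOf_eq] at hui ⊢; rw [sum_lin]) <;>
    rcases le_or_gt (∑ i, a i * c i) 0 with hc | hc <;>
    nlinarith

/-- Segment lemma 2: closure point + interior endpoint: interior for `t > 0`. -/
private lemma cp_seg2 {n : ℕ} {C : Set (Vec n)} (hC : IsConvexPolyhedron C)
    {u c : Vec n} {δ t : ℝ} (hu : u ∈ closure C) (hz : u + δ • c ∈ C)
    (ht0 : 0 < t) (htδ : t ≤ δ) : u + t • c ∈ C := by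
  obtain ⟨k, Hs, hHs, rfl⟩ := hC
  rw [mem_iInter] at hz ⊢
  intro i
  obtain ⟨a, b, hab⟩ := hHs i
  have hui : u ∈ closure (Hs i) := closure_mono (iInter_subset _ i) hu
  have hle := halfspace_le hab hui
  rw [mem_setOf_eq] at hle
  have hzi := hz i
  rcases hab with h | h <;>
    (rw [h, mem_setOf_eq, sum_lin] at hzi; rw [h, mem_setOf_eq, sum_lin]) <;>
    rcases le_or_gt (∑ i, a i * c i) 0 with hc | hc <;>
    nlinarith

private lemma prwa_mem_compl_union {n : ℕ} {F U V : Set (Vec n)} {x : Vec n}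
    (hx : x ∈ prwa F U V) : x ∈ Vᶜ ∪ U := by
  obtain ⟨k, d, c, p, hd, hc, hp0, hstep, hU, hcond⟩ := hx
  cases k with
  | zero =>
    right
    have h0 : (Fin.last 0) = 0 := rfl
    rw [h0, hp0] at hU
    exact hU
  | succ m =>
    have h := hcond 0 0 le_rfl (hd 0)
    simp only [zero_smul, add_zero, Fin.castSucc_zero, hp0] at h
    rcases h with h | h
    · right; rw [h]; exact hU
    · exact h

/-- Prepend one straight segment to a `prwa` trajectory. -/
private lemma prwa_prepend {n : ℕ} {F U V : Set (Vec n)} {x c : Vec n} {δ : ℝ}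
    (hc : c ∈ F) (hδ : 0 ≤ δ) (hx : x + δ • c ∈ prwa F U V)
    (hseg : ∀ t : ℝ, 0 ≤ t → t < δ → x + t • c ∈ Vᶜ ∪ U) : x ∈ prwa F U V := by
  have hxδ := prwa_mem_compl_union hx
  obtain ⟨k, d, cs, p, hd, hcs, hp0, hstep, hU, hcond⟩ := hx
  have hlast : Fin.cases (motive := fun _ : Fin (k + 1 + 1) => Vec n) x p (Fin.last (k + 1))
      = p (Fin.last k) := by
    rw [show Fin.last (k + 1) = (Fin.last k).succ from rfl, Fin.cases_succ]
  refine ⟨k + 1, Fin.cases δ d, Fin.cases c cs, Fin.cases x p, ?_, ?_, ?_, ?_, ?_, ?_⟩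
  · intro i
    induction i using Fin.cases with
    | zero => simpa using hδ
    | succ j => simpa using hd j
  · intro i
    induction i using Fin.cases with
    | zero => simpa using hc
    | succ j => simpa using hcs j
  · simp
  · intro i
    induction i using Fin.cases with
    | zero =>
      simp only [Fin.cases_succ, Fin.castSucc_zero, Fin.cases_zero]
      rw [hp0]
    | succ j =>
      have hcast : (j.succ).castSucc = (j.castSucc).succ := (Fin.succ_castSucc j).symm
      simp only [Fin.cases_succ, hcast]
      exact hstep j
  · simp only [hlast]; exact hU
  · intro i t ht0 htd
    induction i using Fin.cases with
    | zero =>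
      simp only [Fin.castSucc_zero, Fin.cases_zero] at htd ⊢
      rcases lt_or_eq_of_le htd with hlt | heq
      · exact Or.inr (hseg t ht0 hlt)
      · right; rw [heq]; exact hxδ
    | succ j =>
      have hcast : (j.succ).castSucc = (j.castSucc).succ := (Fin.succ_castSucc j).symm
      simp only [Fin.cases_succ, hcast] at htd ⊢
      simp only [hlast]
      exact hcond j t ht0 htd

/-- For a convex polyhedron `F`, polyhedra `U, V`, and convex polyhedra
`P ⊆ ℝ^n \ V` and `Q ⊆ prwa_F(U, V)`, we have
`P ∩ preflow_F(bound(P, Q) ∩ preflow_F(Q)) ⊆ prwa_F(U, V)`. -/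
theorem refinement_step_sound {n : ℕ} (F U V P Q : Set (Vec n))
    (hF : IsConvexPolyhedron F) (hU : IsPolyhedron U) (hV : IsPolyhedron V)
    (hP : IsConvexPolyhedron P) (hPV : P ⊆ Vᶜ)
    (hQ : IsConvexPolyhedron Q) (hQsub : Q ⊆ prwa F U V) :
    P ∩ preflow F (bnd P Q ∩ preflow F Q) ⊆ prwa F U V := by
  rintro u ⟨huP, δ, hδ, cF, hcF, hwb, δ', hδ', c', hc', hz⟩
  set w : Vec n := u + δ • cF with hw_def
  -- basic facts about w
  have hwclP : w ∈ closure P := by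
    rcases hwb with ⟨h, _⟩ | ⟨h, _⟩
    · exact h
    · exact subset_closure h
  have hwclQ : w ∈ closure Q := by
    rcases hwb with ⟨_, h⟩ | ⟨_, h⟩
    · exact subset_closure h
    · exact h
  have hwVU : w ∈ Vᶜ ∪ U := by
    rcases hwb with ⟨_, h⟩ | ⟨h, _⟩
    · exact prwa_mem_compl_union (hQsub h)
    · exact Or.inl (hPV h)
  -- w is in prwa: prepend the segment from w to z := w + δ' • c'
  have hw_prwa : w ∈ prwa F U V := by
    refine prwa_prepend hc' hδ' (hQsub hz) fun t ht0 htδ => ?_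
    rcases eq_or_lt_of_le ht0 with heq | hlt
    · rw [← heq]; simpa using hwVU
    · exact prwa_mem_compl_union (hQsub (cp_seg2 hQ hwclQ hz hlt htδ.le))
  -- u is in prwa: prepend the segment from u to w
  exact prwa_prepend hcF hδ hw_prwa fun t ht0 htδ =>
    Or.inl (hPV (cp_seg1 hP huP hwclP ht0 htδ))
end

section
/- Assume a refinement step 𝒢 →(P,R) 𝒢' (so 𝒢' = 𝒢 ∪ {P ∩ preflow_F(R)} where R is an entry region of 𝒢 from P). Then every entry region R' of 𝒢' that is not an entry region of 𝒢 satisfies R' ⊆ preflow_F(R). -/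
open Set

/-- `R` is an entry region of the family `𝒢` from the convex polyhedron `P ∈ 𝒫`:
a nonempty set `R = bound(P, Q) ∩ preflow_F(Q)` for some `Q ∈ 𝒢`. -/
def IsEntryRegionFrom {n : ℕ} (F : Set (Vec n)) (GG : Set (Set (Vec n)))
    (P R : Set (Vec n)) : Prop :=
  R.Nonempty ∧ ∃ Q ∈ GG, R = bnd P Q ∩ preflow F Q

/-- `R` is an entry region of the family `𝒢` (w.r.t. the family `𝒫`):
a nonempty set `R = bound(P, Q) ∩ preflow_F(Q)` with `P ∈ 𝒫` and `Q ∈ 𝒢`. -/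
def IsEntryRegion {n : ℕ} (F : Set (Vec n)) (PP GG : Set (Set (Vec n)))
    (R : Set (Vec n)) : Prop :=
  ∃ P ∈ PP, IsEntryRegionFrom F GG P R

/-- The refinement step `𝒢 →(P,R) 𝒢'`: `P ∈ 𝒫`, `R` is an entry region of `𝒢` from `P`,
and `𝒢' = 𝒢 ∪ {P ∩ preflow_F(R)}`. -/
def RefStep {n : ℕ} (F : Set (Vec n)) (PP : Set (Set (Vec n)))
    (GG : Set (Set (Vec n))) (P R : Set (Vec n)) (GG' : Set (Set (Vec n))) : Prop :=
  P ∈ PP ∧ IsEntryRegionFrom F GG P R ∧ GG' = GG ∪ {P ∩ preflow F R}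

/-! A new entry region of `𝒢'` enters the new piece `P ∩ preflow_F(R)`, so it lies in
`preflow_F(preflow_F(R))`. For convex `F` the pre-flow is idempotent: two consecutive flow
segments `δ • c + δ' • c'` with `c, c' ∈ F` form a single one `(δ + δ') • c''`, where `c''` is a
convex combination of `c` and `c'`. -/

lemma IsHalfspace.convex {ι : Type} [Fintype ι] {H : Set (ι → ℝ)} (hH : IsHalfspace H) :
    Convex ℝ H := by
  obtain ⟨a, b, rfl | rfl⟩ := hH
  · exact convex_halfSpace_lt (dotProductBilin ℝ ℝ a).isLinear b
  · exact convex_halfSpace_le (dotProductBilin ℝ ℝ a).isLinear b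

lemma IsConvexPolyhedron.convex {ι : Type} [Fintype ι] {P : Set (ι → ℝ)}
    (hP : IsConvexPolyhedron P) : Convex ℝ P := by
  obtain ⟨k, Hs, hHs, rfl⟩ := hP
  exact convex_iInter fun i => (hHs i).convex

section preflow

variable {n : ℕ} {F : Set (Vec n)}

lemma preflow_mono {G G' : Set (Vec n)} (h : G ⊆ G') : preflow F G ⊆ preflow F G' :=
  fun _ ⟨δ, hδ, c, hc, hu⟩ => ⟨δ, hδ, c, hc, h hu⟩

lemma preflow_preflow_subset (hF : Convex ℝ F) (G : Set (Vec n)) :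
    preflow F (preflow F G) ⊆ preflow F G := by
  rintro u ⟨δ, hδ, c, hc, δ', hδ', c', hc', hu⟩
  obtain ⟨c'', hc'', hsum⟩ := hF.exists_mem_add_smul_eq hc hc' hδ hδ'
  refine ⟨δ + δ', add_nonneg hδ hδ', c'', hc'', ?_⟩
  rwa [hsum, ← add_assoc]

lemma IsEntryRegion.union_singleton_cases {PP GG : Set (Set (Vec n))} {Q R : Set (Vec n)}
    (hR : IsEntryRegion F PP (GG ∪ {Q}) R) :
    IsEntryRegion F PP GG R ∨ R ⊆ preflow F Q := by
  obtain ⟨P, hP, hne, Q', hQ' | rfl, rfl⟩ := hR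
  · exact Or.inl ⟨P, hP, hne, Q', hQ', rfl⟩
  · exact Or.inr inter_subset_right

end preflow

theorem new_entry_region_subset_general {n : ℕ} (F : Set (Vec n)) (hF : IsConvexPolyhedron F)
    (PP : Set (Set (Vec n))) (GG GG' : Set (Set (Vec n)))
    (P R : Set (Vec n)) (hstep : RefStep F PP GG P R GG')
    (R' : Set (Vec n)) (hR' : IsEntryRegion F PP GG' R')
    (hnot : ¬ IsEntryRegion F PP GG R') :
    R' ⊆ preflow F R := by
  obtain ⟨-, -, rfl⟩ := hstep
  rcases hR'.union_singleton_cases with hold | hnew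
  · exact absurd hold hnot
  · calc R' ⊆ preflow F (P ∩ preflow F R) := hnew
      _ ⊆ preflow F (preflow F R) := preflow_mono inter_subset_right
      _ ⊆ preflow F R := preflow_preflow_subset hF.convex R

/-- After a refinement step `𝒢 →(P,R) 𝒢'`, every entry region `R'` of
`𝒢'` that is not an entry region of `𝒢` satisfies `R' ⊆ preflow_F(R)`. -/
theorem new_entry_region_subset {n : ℕ} (F : Set (Vec n)) (hF : IsConvexPolyhedron F)
    (PP : Set (Set (Vec n))) (hPPfin : PP.Finite) (hPP : ∀ P ∈ PP, IsConvexPolyhedron P)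
    (GG GG' : Set (Set (Vec n))) (hGGfin : GG.Finite)
    (hGG : ∀ Q ∈ GG, IsConvexPolyhedron Q)
    (P R : Set (Vec n)) (hstep : RefStep F PP GG P R GG')
    (R' : Set (Vec n)) (hR' : IsEntryRegion F PP GG' R')
    (hnot : ¬ IsEntryRegion F PP GG R') :
    R' ⊆ preflow F R :=
  new_entry_region_subset_general F hF PP GG GG' P R hstep R' hR' hnot
end

section
/- The pre-flow operator with respect to a convex set is idempotent: for every convex set F ⊆ ℝ^n and every set G ⊆ ℝ^n, preflow_F(preflow_F(G)) = preflow_F(G). -/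
open Set

/-- The pre-flow operator w.r.t. a convex set is idempotent:
`preflow_F(preflow_F(G)) = preflow_F(G)`. -/
theorem preflow_idempotent {n : ℕ} (F : Set (Vec n)) (hF : Convex ℝ F)
    (G : Set (Vec n)) :
    preflow F (preflow F G) = preflow F G := by
  ext u
  constructor
  · rintro ⟨δ, hδ, c, hc, δ', hδ', c', hc', hmem⟩
    rcases eq_or_lt_of_le (add_nonneg hδ hδ' : (0:ℝ) ≤ δ + δ') with h0 | hpos
    · refine ⟨0, le_refl _, c, hc, ?_⟩
      have hδ0 : δ = 0 := by linarith [hδ, hδ']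
      have hδ'0 : δ' = 0 := by linarith [hδ, hδ']
      simpa [hδ0, hδ'0] using hmem
    · refine ⟨δ + δ', le_of_lt hpos, (δ/(δ+δ')) • c + (δ'/(δ+δ')) • c', ?_, ?_⟩
      · apply hF hc hc' (div_nonneg hδ (le_of_lt hpos)) (div_nonneg hδ' (le_of_lt hpos))
        field_simp
      · have hne : δ + δ' ≠ 0 := ne_of_gt hpos
        have : (δ + δ') • ((δ/(δ+δ')) • c + (δ'/(δ+δ')) • c') = δ • c + δ' • c' := by
          rw [smul_add, smul_smul, smul_smul]
          field_simp
        rw [this, ← add_assoc]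
        exact hmem
  · rintro ⟨δ, hδ, c, hc, hmem⟩
    exact ⟨0, le_refl _, c, hc, by simpa using ⟨δ, hδ, c, hc, hmem⟩⟩
end
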